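/- Fix n ≥ 1. Let L = Fin n × Fin n with involution (i,j)* = (j,i), fusion rule δ((i,j),(k,l),(m,p)) = (if j = k ∧ l = m ∧ p = i then 1 else 0), and define T : L⁶ → ℂ by T(a,b,c;d,e,f) = 1 if δ(a,b,c) = δ(d,e,c*) = δ(e,a,f) = δ(f,d*,b*) = 1 and 0 otherwise. Then T satisfies the orthogonality condition: for all m,l,q,k,p,i ∈ L, ∑_{x ∈ L} T(m,l,q;k,p*,x) · T(l*,m*,i*;p,k*,x) = (if i = q then 1 else 0) · δ(m,l,q) · δ(k*,i,p) (here all loop weights equal 1). -/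
import Mathlib


/-- The involution on the labels of `M_n`: `(i,j)* = (j,i)`. -/
def matStar {n : ℕ} (a : Fin n × Fin n) : Fin n × Fin n := (a.2, a.1)

/-- The admissibility tensor of `M_n`: `δ((i,j),(k,l),(m,p)) = 1` iff `j = k`, `l = m`,
`p = i`. -/
def matDelta {n : ℕ} (a b c : Fin n × Fin n) : ℕ :=
  if a.2 = b.1 ∧ b.2 = c.1 ∧ c.2 = a.1 then 1 else 0

/-- The simplest normalized 6j-symbol of `M_n`: the indicator of admissibility of the
four triangles of the tetrahedron. -/
def matT {n : ℕ} (a b c d e f : Fin n × Fin n) : ℂ :=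
  if matDelta a b c = 1 ∧ matDelta d e (matStar c) = 1 ∧ matDelta e a f = 1 ∧
      matDelta f (matStar d) (matStar b) = 1 then 1 else 0

lemma matDelta_eq_one_iff {n : ℕ} (a b c : Fin n × Fin n) :
    matDelta a b c = 1 ↔ (a.2 = b.1 ∧ b.2 = c.1 ∧ c.2 = a.1) := by
  unfold matDelta; split <;> simp_all

/-- `matT` satisfies the orthogonality condition (all loop weights
being `1`). -/
theorem matT_orthogonality (n : ℕ) (hn : 1 ≤ n) :
    ∀ m l q k p i : Fin n × Fin n,
      ∑ x : Fin n × Fin n,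
          matT m l q k (matStar p) x *
            matT (matStar l) (matStar m) (matStar i) p (matStar k) x
        = (if i = q then 1 else 0) * (matDelta m l q : ℂ) *
            (matDelta (matStar k) i p : ℂ) := by
  rintro ⟨m1, m2⟩ ⟨l1, l2⟩ ⟨q1, q2⟩ ⟨k1, k2⟩ ⟨p1, p2⟩ ⟨i1, i2⟩
  classical
  rw [Finset.sum_eq_single ((m2, p2) : Fin n × Fin n)]
  · simp only [matT, matDelta_eq_one_iff, matStar]
    simp only [matDelta, Nat.cast_ite, Nat.cast_one, Nat.cast_zero, Prod.mk.injEq]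
    split_ifs with hA hB hC hD hE <;>
      first
      | (norm_num; done)
      | (exfalso; simp only [Fin.ext_iff, true_and, and_true] at *; omega)
  · intro x _ hx
    rcases x with ⟨x1, x2⟩
    simp only [matT, matDelta_eq_one_iff, matStar, Prod.mk.injEq] at hx ⊢
    split_ifs with h1 h2 <;> try simp
    obtain ⟨-, -, ⟨-, h3, h4⟩, -⟩ := h1
    exact absurd (by rw [Prod.mk.injEq]; exact ⟨h3.symm, h4⟩) hx
  · intro h
    exact absurd (Finset.mem_univ _) h
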